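/- arXiv:2408.07256 — 8 statements merged into one kernel-verified Lean document; each statement's English description precedes it below -/
import Mathlib

section
/- For every P ∈ ℝ^{n×d}, the function f is Fréchet differentiable at P and its derivative is f′(P)(ΔP) = ⟨4(Diag(F(P)e) − F(P))P, ΔP⟩ for all ΔP ∈ ℝ^{n×d}; equivalently, the gradient of f at P with respect to the trace inner product is 4(Diag(F(P)e) − F(P))P = 2K*(F(P))P. -/
open Matrix

attribute [local instance] Matrix.frobeniusNormedAddCommGroup Matrix.frobeniusNormedSpace

noncomputable section

/-- The all-ones vector in `ℝⁿ`. -/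
def eV (n : ℕ) : Fin n → ℝ := fun _ => 1

/-- The Lindenstrauss operator `K(G) = diag(G)eᵀ + e diag(G)ᵀ − 2G`. -/
def Kop {n : ℕ} (G : Matrix (Fin n) (Fin n) ℝ) : Matrix (Fin n) (Fin n) ℝ :=
  vecMulVec G.diag (eV n) + vecMulVec (eV n) G.diag - (2 : ℝ) • G

/-- The adjoint `K*(S) = 2(Diag(Se) − S)`. -/
def Kstar {n : ℕ} (S : Matrix (Fin n) (Fin n) ℝ) : Matrix (Fin n) (Fin n) ℝ :=
  (2 : ℝ) • (Matrix.diagonal (S *ᵥ eV n) - S)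

/-- `F(P) = K(PPᵀ) − D̄`, where `D̄ = K(P̄P̄ᵀ)`. -/
def Fm {n d : ℕ} (Pbar P : Matrix (Fin n) (Fin d) ℝ) : Matrix (Fin n) (Fin n) ℝ :=
  Kop (P * Pᵀ) - Kop (Pbar * Pbarᵀ)

/-- `f(P) = (1/2)‖F(P)‖²` with the Frobenius norm. -/
def fObj {n d : ℕ} (Pbar P : Matrix (Fin n) (Fin d) ℝ) : ℝ :=
  (1 / 2) * ‖Fm Pbar P‖ ^ 2

/-- The Hessian quadratic form of `f` at `P`:
`Q_P(ΔP) = ‖K(PΔPᵀ + ΔPPᵀ)‖² + 2⟨F(P), K(ΔPΔPᵀ)⟩`. -/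
def QForm {n d : ℕ} (Pbar P ΔP : Matrix (Fin n) (Fin d) ℝ) : ℝ :=
  ‖Kop (P * ΔPᵀ + ΔP * Pᵀ)‖ ^ 2 +
    2 * Matrix.trace ((Fm Pbar P)ᵀ * Kop (ΔP * ΔPᵀ))

/-- `x` is a local minimizer of `g`: there is `δ > 0` with `g x ≤ g y` whenever `‖y − x‖ ≤ δ`. -/
def IsLocMin {E : Type*} [SeminormedAddCommGroup E] (g : E → ℝ) (x : E) : Prop :=
  ∃ δ > 0, ∀ y, ‖y - x‖ ≤ δ → g x ≤ g y



def inn {a b : ℕ} (A B : Matrix (Fin a) (Fin b) ℝ) : ℝ := ∑ i, ∑ j, A i j * B i j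

lemma norm_sq_eq {a b : ℕ} (A : Matrix (Fin a) (Fin b) ℝ) : ‖A‖ ^ 2 = ∑ i, ∑ j, A i j ^ 2 := by
  have hX : (0:ℝ) ≤ ∑ i, ∑ j, ‖A i j‖ ^ (2:ℝ) := by positivity
  rw [Matrix.frobenius_norm_def, ← Real.rpow_natCast _ 2, ← Real.rpow_mul hX]
  norm_num

lemma inn_trace {a b : ℕ} (A B : Matrix (Fin a) (Fin b) ℝ) :
    Matrix.trace (Aᵀ * B) = inn A B := by
  simp only [Matrix.trace, Matrix.diag, Matrix.mul_apply, Matrix.transpose_apply, inn]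
  exact Finset.sum_comm

lemma norm_add_sq' {a b : ℕ} (A B : Matrix (Fin a) (Fin b) ℝ) :
    ‖A + B‖ ^ 2 = ‖A‖ ^ 2 + 2 * inn A B + ‖B‖ ^ 2 := by
  simp only [norm_sq_eq, inn, Matrix.add_apply, Finset.mul_sum, ← Finset.sum_add_distrib]
  exact Finset.sum_congr rfl fun i _ => Finset.sum_congr rfl fun j _ => by ring

lemma inn_add_right {a b : ℕ} (A B C : Matrix (Fin a) (Fin b) ℝ) :
    inn A (B + C) = inn A B + inn A C := by
  simp only [inn, Matrix.add_apply, mul_add, Finset.sum_add_distrib]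

lemma entry_abs_le {a b : ℕ} (A : Matrix (Fin a) (Fin b) ℝ) (i j) : |A i j| ≤ ‖A‖ := by
  have h1 : A i j ^ 2 ≤ ‖A‖ ^ 2 := by
    rw [norm_sq_eq]
    calc A i j ^ 2 ≤ ∑ j', A i j' ^ 2 :=
          Finset.single_le_sum (f := fun j' => A i j' ^ 2) (fun k _ => sq_nonneg _)
            (Finset.mem_univ j)
      _ ≤ ∑ i', ∑ j', A i' j' ^ 2 :=
          Finset.single_le_sum (f := fun i' => ∑ j', A i' j' ^ 2)
            (fun k _ => Finset.sum_nonneg fun _ _ => sq_nonneg _) (Finset.mem_univ i)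
  calc |A i j| = Real.sqrt (A i j ^ 2) := (Real.sqrt_sq_eq_abs _).symm
    _ ≤ Real.sqrt (‖A‖ ^ 2) := Real.sqrt_le_sqrt h1
    _ = ‖A‖ := by rw [Real.sqrt_sq (norm_nonneg _)]

lemma abs_inn_le {a b : ℕ} (A B : Matrix (Fin a) (Fin b) ℝ) :
    |inn A B| ≤ (a * b : ℝ) * (‖A‖ * ‖B‖) := by
  calc |inn A B| ≤ ∑ i, ∑ j, |A i j * B i j| := by
        refine (Finset.abs_sum_le_sum_abs _ _).trans ?_
        exact Finset.sum_le_sum fun i _ => Finset.abs_sum_le_sum_abs _ _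
    _ ≤ ∑ i : Fin a, ∑ j : Fin b, ‖A‖ * ‖B‖ := by
        refine Finset.sum_le_sum fun i _ => Finset.sum_le_sum fun j _ => ?_
        rw [abs_mul]
        exact mul_le_mul (entry_abs_le A i j) (entry_abs_le B i j) (abs_nonneg _) (norm_nonneg _)
    _ = (a * b : ℝ) * (‖A‖ * ‖B‖) := by
        simp [Finset.sum_const, Finset.card_univ, mul_assoc]

lemma norm_le_of_entrywise {a b : ℕ} (M : Matrix (Fin a) (Fin b) ℝ) (c : ℝ) (hc : 0 ≤ c)
    (h : ∀ i j, |M i j| ≤ c) : ‖M‖ ≤ (a * b : ℝ) * c := by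
  have hab : (0:ℝ) ≤ (a*b:ℝ) := by positivity
  have h2 : ‖M‖ ^ 2 ≤ ((a * b : ℝ) * c) ^ 2 := by
    rw [norm_sq_eq]
    calc ∑ i, ∑ j, M i j ^ 2 ≤ ∑ _i : Fin a, ∑ _j : Fin b, c ^ 2 := by
          refine Finset.sum_le_sum fun i _ => Finset.sum_le_sum fun j _ => ?_
          rw [← sq_abs]; exact pow_le_pow_left₀ (abs_nonneg _) (h i j) 2
      _ = (a * b : ℝ) * c ^ 2 := by simp [Finset.sum_const, Finset.card_univ, mul_assoc]
      _ ≤ ((a * b : ℝ))^2 * c ^ 2 := by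
          have hnat : (a*b : ℕ) ≤ (a*b : ℕ)^2 := Nat.le_self_pow (by norm_num) _
          have : (a*b : ℝ) ≤ ((a:ℝ)*b)^2 := by exact_mod_cast hnat
          nlinarith [sq_nonneg c]
      _ = ((a * b : ℝ) * c) ^ 2 := by ring
  calc ‖M‖ = Real.sqrt (‖M‖ ^ 2) := by rw [Real.sqrt_sq (norm_nonneg _)]
    _ ≤ Real.sqrt (((a*b:ℝ)*c)^2) := Real.sqrt_le_sqrt h2
    _ = (a*b:ℝ)*c := Real.sqrt_sq (by positivity)

lemma Kop_apply {n : ℕ} (G : Matrix (Fin n) (Fin n) ℝ) (i j) :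
    Kop G i j = G i i + G j j - 2 * G i j := by
  simp [Kop, vecMulVec_apply, eV, Matrix.diag]

lemma Kop_add {n : ℕ} (A B : Matrix (Fin n) (Fin n) ℝ) : Kop (A + B) = Kop A + Kop B := by
  ext i j
  simp only [Kop_apply, Matrix.add_apply]
  ring

lemma Kop_norm_le {n : ℕ} (G : Matrix (Fin n) (Fin n) ℝ) :
    ‖Kop G‖ ≤ (4 * (n:ℝ)^2) * ‖G‖ := by
  have h : ∀ i j, |Kop G i j| ≤ 4 * ‖G‖ := by
    intro i j
    rw [Kop_apply]
    have h1 := entry_abs_le G i i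
    have h2 := entry_abs_le G j j
    have h3 := entry_abs_le G i j
    calc |G i i + G j j - 2 * G i j| ≤ |G i i| + |G j j| + 2 * |G i j| := by
          cases abs_cases (G i i) <;> cases abs_cases (G j j) <;> cases abs_cases (G i j) <;>
            cases abs_cases (G i i + G j j - 2 * G i j) <;> linarith
      _ ≤ 4 * ‖G‖ := by
          have := abs_nonneg (G i j); linarith
  have := norm_le_of_entrywise (Kop G) (4 * ‖G‖) (by positivity) h
  calc ‖Kop G‖ ≤ ((n:ℝ) * n) * (4 * ‖G‖) := this
    _ = (4 * (n:ℝ)^2) * ‖G‖ := by ring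

lemma adjoint_id {n d : ℕ} (S : Matrix (Fin n) (Fin n) ℝ) (hS : Sᵀ = S)
    (P H : Matrix (Fin n) (Fin d) ℝ) :
    inn S (Kop (P * Hᵀ + H * Pᵀ)) = inn (((2:ℝ) • Kstar S) * P) H := by
  have hsym : ∀ i j, S j i = S i j := fun i j => congrFun (congrFun hS i) j
  set a : Fin n → Fin n → ℝ := fun i j => ∑ k, P i k * H j k with ha
  set b : Fin n → Fin n → ℝ := fun i j => ∑ k, H i k * P j k with hb
  have hG : ∀ i j, (P * Hᵀ + H * Pᵀ) i j = a i j + b i j := by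
    intro i j
    simp [Matrix.mul_apply, Matrix.add_apply, Matrix.transpose_apply, ha, hb]
  have hba : ∀ i, b i i = a i i := by
    intro i; simp [ha, hb, mul_comm]
  have hm : ((2:ℝ) • Kstar S) * P
      = (4:ℝ) • (Matrix.diagonal (S *ᵥ eV n) * P) - (4:ℝ) • (S * P) := by
    rw [Kstar, smul_smul]
    norm_num
    rw [Matrix.sub_mul, smul_sub]
  have hentry : ∀ i k, (((2:ℝ) • Kstar S) * P) i k
      = 4 * ((∑ m, S i m) * P i k - ∑ l, S i l * P l k) := by
    intro i k
    rw [hm]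
    simp [Matrix.sub_apply, Matrix.smul_apply, Matrix.mul_apply, Matrix.diagonal_apply,
      ite_mul, zero_mul, Finset.sum_ite_eq, Matrix.mulVec, dotProduct, eV, smul_eq_mul]
    ring
  have hL : inn S (Kop (P * Hᵀ + H * Pᵀ))
      = ∑ i, ∑ j, S i j * (2 * a i i + 2 * a j j - 2 * a i j - 2 * b i j) := by
    unfold inn
    refine Finset.sum_congr rfl fun i _ => Finset.sum_congr rfl fun j _ => ?_
    rw [Kop_apply, hG, hG, hG, hba, hba]
    ring
  have f1 : ∑ i, ∑ j, S i j * a i j = ∑ i, ∑ j, S i j * b i j := by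
    rw [Finset.sum_comm]
    refine Finset.sum_congr rfl fun i _ => Finset.sum_congr rfl fun j _ => ?_
    rw [hsym]
    simp only [ha, hb]
    rw [Finset.mul_sum, Finset.mul_sum]
    exact Finset.sum_congr rfl fun k _ => by ring
  have t2 : ∑ i, ∑ j, S i j * a j j = ∑ i, ∑ j, S i j * a i i := by
    rw [Finset.sum_comm]
    exact Finset.sum_congr rfl fun i _ => Finset.sum_congr rfl fun j _ => by rw [hsym]
  have t1' : ∑ i, ∑ j, S i j * a i i = ∑ i, (∑ j, S i j) * a i i := by
    refine Finset.sum_congr rfl fun i _ => ?_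
    rw [Finset.sum_mul]
  have hR : inn (((2:ℝ) • Kstar S) * P) H
      = ∑ i, (4 * ((∑ j, S i j) * a i i) - 4 * ∑ l, S i l * b i l) := by
    unfold inn
    refine Finset.sum_congr rfl fun i _ => ?_
    calc ∑ k, (((2:ℝ) • Kstar S) * P) i k * H i k
        = ∑ k, (4 * ((∑ m, S i m) * (P i k * H i k))
            - ∑ l, 4 * (S i l * (P l k * H i k))) := by
          refine Finset.sum_congr rfl fun k _ => ?_
          rw [hentry]
          have hsm : (∑ l, S i l * P l k) * H i k = ∑ l, S i l * (P l k * H i k) := by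
            rw [Finset.sum_mul]
            exact Finset.sum_congr rfl fun l _ => by ring
          rw [← Finset.mul_sum, ← hsm]
          ring
      _ = 4 * ((∑ j, S i j) * a i i) - 4 * ∑ l, S i l * b i l := by
          rw [Finset.sum_sub_distrib]
          congr 1
          · simp only [ha, Finset.mul_sum]
          · rw [Finset.sum_comm]
            simp only [hb]
            rw [Finset.mul_sum]
            refine Finset.sum_congr rfl fun l _ => ?_
            rw [Finset.mul_sum, Finset.mul_sum]
            exact Finset.sum_congr rfl fun k _ => by ring
  have expand : ∑ i, ∑ j, S i j * (2 * a i i + 2 * a j j - 2 * a i j - 2 * b i j)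
      = 2 * (∑ i, ∑ j, S i j * a i i) + 2 * (∑ i, ∑ j, S i j * a j j)
        - 2 * (∑ i, ∑ j, S i j * a i j) - 2 * (∑ i, ∑ j, S i j * b i j) := by
    simp only [Finset.mul_sum, ← Finset.sum_add_distrib, ← Finset.sum_sub_distrib]
    exact Finset.sum_congr rfl fun i _ => Finset.sum_congr rfl fun j _ => by ring
  rw [hL, expand, f1, t2, t1', hR, Finset.sum_sub_distrib, ← Finset.mul_sum, ← Finset.mul_sum]
  have : ∑ i, ∑ l, S i l * b i l = ∑ i, ∑ j, S i j * b i j := rfl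
  rw [this]
  ring



lemma Kop_symm {n : ℕ} (G : Matrix (Fin n) (Fin n) ℝ) (hG : Gᵀ = G) : (Kop G)ᵀ = Kop G := by
  ext i j
  rw [Matrix.transpose_apply, Kop_apply, Kop_apply]
  have h := congrFun (congrFun hG i) j
  rw [Matrix.transpose_apply] at h
  rw [h]
  ring

lemma Fm_symm {n d : ℕ} (Pbar P : Matrix (Fin n) (Fin d) ℝ) : (Fm Pbar P)ᵀ = Fm Pbar P := by
  have h1 : (P * Pᵀ)ᵀ = P * Pᵀ := by rw [Matrix.transpose_mul, Matrix.transpose_transpose]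
  have h2 : (Pbar * Pbarᵀ)ᵀ = Pbar * Pbarᵀ := by
    rw [Matrix.transpose_mul, Matrix.transpose_transpose]
  rw [Fm, Matrix.transpose_sub, Kop_symm _ h1, Kop_symm _ h2]

lemma Fm_expand {n d : ℕ} (Pbar P H : Matrix (Fin n) (Fin d) ℝ) :
    Fm Pbar (P + H) = Fm Pbar P + (Kop (P * Hᵀ + H * Pᵀ) + Kop (H * Hᵀ)) := by
  have hmul : (P + H) * (P + H)ᵀ = P * Pᵀ + (P * Hᵀ + H * Pᵀ) + H * Hᵀ := by
    rw [Matrix.transpose_add, Matrix.add_mul, Matrix.mul_add, Matrix.mul_add]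
    abel
  rw [Fm, Fm, hmul, Kop_add, Kop_add]
  abel

def innCLM {a b : ℕ} (M : Matrix (Fin a) (Fin b) ℝ) : Matrix (Fin a) (Fin b) ℝ →L[ℝ] ℝ :=
  LinearMap.toContinuousLinearMap
    { toFun := fun H => inn M H
      map_add' := fun x y => by
        simp [inn, Matrix.add_apply, mul_add, Finset.sum_add_distrib]
      map_smul' := fun c x => by
        simp only [inn, Matrix.smul_apply, smul_eq_mul, RingHom.id_apply, Finset.mul_sum]
        exact Finset.sum_congr rfl fun i _ => Finset.sum_congr rfl fun j _ => by ring }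

lemma innCLM_apply {a b : ℕ} (M H : Matrix (Fin a) (Fin b) ℝ) : innCLM M H = inn M H := rfl

theorem stmt_0' {n d : ℕ} (Pbar : Matrix (Fin n) (Fin d) ℝ)
    (P : Matrix (Fin n) (Fin d) ℝ) :
    ∃ φ : Matrix (Fin n) (Fin d) ℝ →L[ℝ] ℝ,
      HasFDerivAt (fObj Pbar) φ P ∧
      ∀ ΔP : Matrix (Fin n) (Fin d) ℝ,
        φ ΔP =
          Matrix.trace
            ((((4 : ℝ) • (Matrix.diagonal (Fm Pbar P *ᵥ eV n) - Fm Pbar P)) * P)ᵀ * ΔP) ∧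
        φ ΔP = Matrix.trace ((((2 : ℝ) • Kstar (Fm Pbar P)) * P)ᵀ * ΔP) := by
  set S := Fm Pbar P with hSdef
  set M := ((2:ℝ) • Kstar S) * P with hMdef
  have hfour : ((4 : ℝ) • (Matrix.diagonal (S *ᵥ eV n) - S)) = (2:ℝ) • Kstar S := by
    rw [Kstar, smul_smul]; norm_num
  refine ⟨innCLM M, ?_, ?_⟩
  · -- differentiability
    refine hasFDerivAt_iff_isLittleO_nhds_zero.2 ?_
    have key : ∀ H : Matrix (Fin n) (Fin d) ℝ,
        fObj Pbar (P + H) - fObj Pbar P - innCLM M H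
          = inn S (Kop (H * Hᵀ))
            + (1/2) * ‖Kop (P * Hᵀ + H * Pᵀ) + Kop (H * Hᵀ)‖ ^ 2 := by
      intro H
      have h1 : fObj Pbar (P + H)
          = (1/2) * (‖S‖^2 + 2 * inn S (Kop (P * Hᵀ + H * Pᵀ) + Kop (H * Hᵀ))
              + ‖Kop (P * Hᵀ + H * Pᵀ) + Kop (H * Hᵀ)‖^2) := by
        rw [fObj, Fm_expand, ← hSdef, norm_add_sq']
      have h2 : inn S (Kop (P * Hᵀ + H * Pᵀ) + Kop (H * Hᵀ))
          = inn M H + inn S (Kop (H * Hᵀ)) := by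
        rw [inn_add_right, adjoint_id S (Fm_symm Pbar P) P H, hMdef]
      rw [h1, h2, innCLM_apply, fObj, ← hSdef]
      ring
    set C1 : ℝ := 4 * (n:ℝ)^2 with hC1
    have hC1nn : 0 ≤ C1 := by positivity
    set C : ℝ := (n:ℝ)^2 * ‖S‖ * C1 + (1/2) * (C1 * (2 * ‖P‖ + 1))^2 with hC
    have hCnn : 0 ≤ C := by positivity
    have hbound : ∀ H : Matrix (Fin n) (Fin d) ℝ, ‖H‖ ≤ 1 →
        |fObj Pbar (P + H) - fObj Pbar P - innCLM M H| ≤ C * ‖H‖^2 := by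
      intro H hH
      have hHnn : (0:ℝ) ≤ ‖H‖ := norm_nonneg _
      have hQ : ‖Kop (H * Hᵀ)‖ ≤ C1 * ‖H‖^2 := by
        refine (Kop_norm_le _).trans ?_
        have : ‖H * Hᵀ‖ ≤ ‖H‖ * ‖H‖ := by
          refine (Matrix.frobenius_norm_mul H Hᵀ).trans ?_
          rw [Matrix.frobenius_norm_transpose]
        calc C1 * ‖H * Hᵀ‖ ≤ C1 * (‖H‖ * ‖H‖) := by
              exact mul_le_mul_of_nonneg_left this hC1nn
          _ = C1 * ‖H‖^2 := by ring
      have hterm1 : |inn S (Kop (H * Hᵀ))| ≤ (n:ℝ)^2 * ‖S‖ * C1 * ‖H‖^2 := by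
        refine (abs_inn_le S (Kop (H * Hᵀ))).trans ?_
        have := mul_le_mul_of_nonneg_left hQ (norm_nonneg S)
        calc ((n:ℝ) * n) * (‖S‖ * ‖Kop (H * Hᵀ)‖) ≤ ((n:ℝ) * n) * (‖S‖ * (C1 * ‖H‖^2)) := by
              apply mul_le_mul_of_nonneg_left _ (by positivity)
              exact this
          _ = (n:ℝ)^2 * ‖S‖ * C1 * ‖H‖^2 := by ring
      have hL : ‖Kop (P * Hᵀ + H * Pᵀ)‖ ≤ C1 * (2 * ‖P‖) * ‖H‖ := by
        refine (Kop_norm_le _).trans ?_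
        have h1 : ‖P * Hᵀ + H * Pᵀ‖ ≤ 2 * ‖P‖ * ‖H‖ := by
          refine (norm_add_le _ _).trans ?_
          have h2 : ‖P * Hᵀ‖ ≤ ‖P‖ * ‖H‖ := by
            refine (Matrix.frobenius_norm_mul P Hᵀ).trans ?_
            rw [Matrix.frobenius_norm_transpose]
          have h3 : ‖H * Pᵀ‖ ≤ ‖H‖ * ‖P‖ := by
            refine (Matrix.frobenius_norm_mul H Pᵀ).trans ?_
            rw [Matrix.frobenius_norm_transpose]
          linarith
        calc C1 * ‖P * Hᵀ + H * Pᵀ‖ ≤ C1 * (2 * ‖P‖ * ‖H‖) :=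
              mul_le_mul_of_nonneg_left h1 hC1nn
          _ = C1 * (2 * ‖P‖) * ‖H‖ := by ring
      have hsum : ‖Kop (P * Hᵀ + H * Pᵀ) + Kop (H * Hᵀ)‖ ≤ C1 * (2 * ‖P‖ + 1) * ‖H‖ := by
        refine (norm_add_le _ _).trans ?_
        have hQ' : ‖Kop (H * Hᵀ)‖ ≤ C1 * ‖H‖ := by
          refine hQ.trans ?_
          have : ‖H‖^2 ≤ ‖H‖ := by nlinarith
          nlinarith
        calc ‖Kop (P * Hᵀ + H * Pᵀ)‖ + ‖Kop (H * Hᵀ)‖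
            ≤ C1 * (2 * ‖P‖) * ‖H‖ + C1 * ‖H‖ := add_le_add hL hQ'
          _ = C1 * (2 * ‖P‖ + 1) * ‖H‖ := by ring
      have hterm2 : (1/2) * ‖Kop (P * Hᵀ + H * Pᵀ) + Kop (H * Hᵀ)‖^2
          ≤ (1/2) * (C1 * (2 * ‖P‖ + 1))^2 * ‖H‖^2 := by
        have h0 : (0:ℝ) ≤ ‖Kop (P * Hᵀ + H * Pᵀ) + Kop (H * Hᵀ)‖ := norm_nonneg _
        nlinarith [hsum]
      rw [key]
      calc |inn S (Kop (H * Hᵀ)) + (1/2) * ‖Kop (P * Hᵀ + H * Pᵀ) + Kop (H * Hᵀ)‖^2|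
          ≤ |inn S (Kop (H * Hᵀ))| + (1/2) * ‖Kop (P * Hᵀ + H * Pᵀ) + Kop (H * Hᵀ)‖^2 := by
            refine (abs_add_le _ _).trans ?_
            gcongr
            rw [abs_of_nonneg (by positivity)]
        _ ≤ (n:ℝ)^2 * ‖S‖ * C1 * ‖H‖^2 + (1/2) * (C1 * (2 * ‖P‖ + 1))^2 * ‖H‖^2 :=
            add_le_add hterm1 hterm2
        _ = C * ‖H‖^2 := by rw [hC]; ring
    have hO : (fun H => fObj Pbar (P + H) - fObj Pbar P - innCLM M H)
        =O[nhds 0] (fun H : Matrix (Fin n) (Fin d) ℝ => ‖H‖^2) := by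
      rw [Asymptotics.isBigO_iff]
      refine ⟨C, ?_⟩
      filter_upwards [Metric.closedBall_mem_nhds (0 : Matrix (Fin n) (Fin d) ℝ) one_pos] with H hH
      rw [Metric.mem_closedBall, dist_zero_right] at hH
      rw [Real.norm_eq_abs, Real.norm_eq_abs, abs_of_nonneg (sq_nonneg ‖H‖)]
      exact hbound H hH
    have hlo : (fun H : Matrix (Fin n) (Fin d) ℝ => ‖H‖^2)
        =o[nhds 0] (fun H : Matrix (Fin n) (Fin d) ℝ => H) := by
      rw [← Asymptotics.isLittleO_norm_right]
      have h1 : (fun H : Matrix (Fin n) (Fin d) ℝ => ‖H‖)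
          =o[nhds 0] (fun _ : Matrix (Fin n) (Fin d) ℝ => (1:ℝ)) := by
        rw [Asymptotics.isLittleO_one_iff]
        exact tendsto_norm_zero
      have h2 : (fun H : Matrix (Fin n) (Fin d) ℝ => ‖H‖)
          =O[nhds 0] (fun H : Matrix (Fin n) (Fin d) ℝ => ‖H‖) :=
        Asymptotics.isBigO_refl _ _
      have := h1.mul_isBigO h2
      simpa [pow_two] using this
    exact hO.trans_isLittleO hlo
  · intro ΔP
    constructor
    · rw [innCLM_apply, ← inn_trace, hfour]
    · rw [innCLM_apply, ← inn_trace]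

/-- `f` is Fréchet differentiable at every `P`, with derivative
`ΔP ↦ ⟨4(Diag(F(P)e) − F(P))P, ΔP⟩ = ⟨2K*(F(P))P, ΔP⟩` (trace inner product). -/
theorem stmt_0 {n d : ℕ} (hn : 0 < n) (hd : 0 < d)
    (Pbar : Matrix (Fin n) (Fin d) ℝ) (hPbar : Pbarᵀ *ᵥ eV n = 0)
    (P : Matrix (Fin n) (Fin d) ℝ) :
    ∃ φ : Matrix (Fin n) (Fin d) ℝ →L[ℝ] ℝ,
      HasFDerivAt (fObj Pbar) φ P ∧
      ∀ ΔP : Matrix (Fin n) (Fin d) ℝ,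
        φ ΔP =
          Matrix.trace
            ((((4 : ℝ) • (Matrix.diagonal (Fm Pbar P *ᵥ eV n) - Fm Pbar P)) * P)ᵀ * ΔP) ∧
        φ ΔP = Matrix.trace ((((2 : ℝ) • Kstar (Fm Pbar P)) * P)ᵀ * ΔP) := by
  exact stmt_0' Pbar P
end
end

section
/- Let P* ∈ ℝ^{n×d}, set v* = (1/n)P*ᵀe ∈ ℝ^d, P*_v = P* − e v*ᵀ, and L* = VᵀP*_v ∈ ℝ^{(n−1)×d}. Then L* is a local minimizer of f_L if and only if P*_v is a local minimizer of f, and this holds if and only if P* is a local minimizer of f. -/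
open Matrix

attribute [local instance] Matrix.frobeniusNormedAddCommGroup Matrix.frobeniusNormedSpace

noncomputable section

lemma normsq_eq_sum {m k : ℕ} (A : Matrix (Fin m) (Fin k) ℝ) :
    ‖A‖ ^ 2 = ∑ i, ∑ j, (A i j) ^ 2 := by
  rw [Matrix.frobenius_norm_def]
  rw [← Real.rpow_natCast _ 2, ← Real.rpow_mul (by positivity)]
  norm_num

lemma normsq_eq_trace {m k : ℕ} (A : Matrix (Fin m) (Fin k) ℝ) :
    ‖A‖ ^ 2 = (Aᵀ * A).trace := by
  rw [normsq_eq_sum]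
  simp only [Matrix.trace, Matrix.diag, Matrix.mul_apply, Matrix.transpose_apply, pow_two]
  rw [Finset.sum_comm]

lemma Kop_PPt_apply {n d : ℕ} (P : Matrix (Fin n) (Fin d) ℝ) (i j : Fin n) :
    Kop (P * Pᵀ) i j = ∑ k, (P i k - P j k) ^ 2 := by
  simp only [Kop, Matrix.sub_apply, Matrix.add_apply, Matrix.smul_apply, Matrix.vecMulVec_apply,
    Matrix.diag, eV, Matrix.mul_apply, Matrix.transpose_apply, smul_eq_mul]
  have h : ∑ k, (P i k - P j k) ^ 2
      = ∑ k, (P i k * P i k + P j k * P j k - 2 * (P i k * P j k)) := by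
    congr 1 with k; ring
  rw [h, Finset.sum_sub_distrib, Finset.sum_add_distrib, ← Finset.mul_sum]
  ring

lemma Fm_translate {n d : ℕ} (Pbar P : Matrix (Fin n) (Fin d) ℝ) (w : Fin d → ℝ) :
    Fm Pbar (P + vecMulVec (eV n) w) = Fm Pbar P := by
  unfold Fm
  congr 1
  ext i j
  rw [Kop_PPt_apply, Kop_PPt_apply]
  congr 1 with k
  simp only [Matrix.add_apply, Matrix.vecMulVec_apply, eV]
  ring

lemma fObj_translate {n d : ℕ} (Pbar P : Matrix (Fin n) (Fin d) ℝ) (w : Fin d → ℝ) :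
    fObj Pbar (P + vecMulVec (eV n) w) = fObj Pbar P := by
  unfold fObj
  rw [Fm_translate]

lemma isLocMin_translate {E : Type*} [SeminormedAddCommGroup E] (g : E → ℝ) (c : E)
    (hg : ∀ y, g (y + c) = g y) (x : E) : IsLocMin g x ↔ IsLocMin g (x + c) := by
  constructor
  · rintro ⟨δ, hδ, h⟩
    refine ⟨δ, hδ, fun y hy => ?_⟩
    have h1 : ‖(y - c) - x‖ ≤ δ := by
      have he : (y - c) - x = y - (x + c) := by abel
      rw [he]; exact hy
    calc g (x + c) = g x := hg x
      _ ≤ g (y - c) := h _ h1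
      _ = g y := by
          have h5 := hg (y - c)
          rw [show y - c + c = y by abel] at h5
          exact h5.symm
  · rintro ⟨δ, hδ, h⟩
    refine ⟨δ, hδ, fun y hy => ?_⟩
    have h1 : ‖(y + c) - (x + c)‖ ≤ δ := by
      have he : (y + c) - (x + c) = y - x := by abel
      rw [he]; exact hy
    calc g x = g (x + c) := (hg x).symm
      _ ≤ g (y + c) := h _ h1
      _ = g y := hg y

lemma VVt_eq {n : ℕ} (hn : 0 < n) (V : Matrix (Fin n) (Fin (n - 1)) ℝ)
    (hV : Vᵀ * V = 1) (hVe : Vᵀ *ᵥ eV n = 0) :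
    V * Vᵀ = 1 - (n : ℝ)⁻¹ • vecMulVec (eV n) (eV n) := by
  have hn' : (n : ℝ) ≠ 0 := Nat.cast_ne_zero.mpr hn.ne'
  set c : Matrix (Fin n) (Fin 1) ℝ := Matrix.of (fun _ _ => (Real.sqrt n)⁻¹) with hc
  have hsum : ∀ j, ∑ i, V i j = 0 := by
    intro j
    have := congrFun hVe j
    simpa [Matrix.mulVec, dotProduct, eV] using this
  have h1 : Vᵀ * c = 0 := by
    ext j k
    simp only [Matrix.mul_apply, Matrix.transpose_apply, hc, Matrix.of_apply, Matrix.zero_apply,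
      ← Finset.sum_mul, hsum j, zero_mul]
  have h2 : cᵀ * V = 0 := by
    ext k j
    simp only [Matrix.mul_apply, Matrix.transpose_apply, hc, Matrix.of_apply, Matrix.zero_apply,
      ← Finset.mul_sum, hsum j, mul_zero]
  have hss : (Real.sqrt n)⁻¹ * (Real.sqrt n)⁻¹ = (n : ℝ)⁻¹ := by
    rw [← mul_inv, Real.mul_self_sqrt (Nat.cast_nonneg n)]
  have h3 : cᵀ * c = 1 := by
    ext k l
    have hk : k = l := Subsingleton.elim k l
    subst hk
    simp [Matrix.mul_apply, hc, hss, Finset.sum_const, Matrix.one_apply, hn']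
  have hWtW : fromRows Vᵀ cᵀ * fromCols V c = 1 := by
    rw [fromRows_mul_fromCols, hV, h1, h2, h3, Matrix.fromBlocks_one]
  have e : Fin n ≃ Fin (n - 1) ⊕ Fin 1 :=
    (finCongr (by omega : n = (n - 1) + 1)).trans finSumFinEquiv.symm
  have hWWt : fromCols V c * fromRows Vᵀ cᵀ = 1 :=
    (Matrix.fromCols_mul_fromRows_eq_one_comm e V c Vᵀ cᵀ).mpr hWtW
  rw [fromCols_mul_fromRows] at hWWt
  have hcc : c * cᵀ = (n : ℝ)⁻¹ • vecMulVec (eV n) (eV n) := by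
    ext i j
    simp [Matrix.mul_apply, hc, hss, Matrix.vecMulVec_apply, eV]
  rw [← hcc]
  exact eq_sub_of_add_eq hWWt

lemma norm_V_mul {n d : ℕ} (V : Matrix (Fin n) (Fin (n - 1)) ℝ) (hV : Vᵀ * V = 1)
    (M : Matrix (Fin (n - 1)) (Fin d) ℝ) : ‖V * M‖ = ‖M‖ := by
  have h : ‖V * M‖ ^ 2 = ‖M‖ ^ 2 := by
    rw [normsq_eq_trace, normsq_eq_trace, Matrix.transpose_mul, Matrix.mul_assoc,
      ← Matrix.mul_assoc Vᵀ, hV, Matrix.one_mul]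
  exact (pow_left_inj₀ (norm_nonneg _) (norm_nonneg _) two_ne_zero).mp h

lemma trace_outer_nonneg {n d : ℕ} (u : Fin n → ℝ) (M : Matrix (Fin n) (Fin d) ℝ) :
    0 ≤ (Mᵀ * vecMulVec u u * M).trace := by
  have h : (Mᵀ * vecMulVec u u * M).trace = ∑ k, (∑ i, u i * M i k) ^ 2 := by
    simp only [Matrix.trace, Matrix.diag, Matrix.mul_apply, Matrix.vecMulVec_apply,
      Matrix.transpose_apply]
    refine Finset.sum_congr rfl fun k _ => ?_
    rw [pow_two, Finset.sum_mul_sum]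
    refine Finset.sum_congr rfl fun l _ => ?_
    rw [Finset.sum_mul]
    refine Finset.sum_congr rfl fun i _ => ?_
    ring
  rw [h]
  exact Finset.sum_nonneg fun _ _ => sq_nonneg _

lemma norm_Vt_mul_le {n d : ℕ} (hn : 0 < n) (V : Matrix (Fin n) (Fin (n - 1)) ℝ)
    (hV : Vᵀ * V = 1) (hVe : Vᵀ *ᵥ eV n = 0) (M : Matrix (Fin n) (Fin d) ℝ) :
    ‖Vᵀ * M‖ ≤ ‖M‖ := by
  have h : ‖Vᵀ * M‖ ^ 2 = ‖M‖ ^ 2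
      - (n : ℝ)⁻¹ * (Mᵀ * vecMulVec (eV n) (eV n) * M).trace := by
    rw [normsq_eq_trace, normsq_eq_trace, Matrix.transpose_mul, Matrix.transpose_transpose,
      Matrix.mul_assoc, ← Matrix.mul_assoc V, VVt_eq hn V hV hVe]
    rw [Matrix.sub_mul, Matrix.one_mul, Matrix.mul_sub, Matrix.trace_sub]
    rw [Matrix.smul_mul, Matrix.mul_smul, Matrix.trace_smul]
    rw [← Matrix.mul_assoc]
    simp [smul_eq_mul]
  have h2 := trace_outer_nonneg (eV n) M
  have h3 : (0:ℝ) ≤ (n : ℝ)⁻¹ := by positivity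
  have h4 : ‖Vᵀ * M‖ ^ 2 ≤ ‖M‖ ^ 2 := by nlinarith
  exact (pow_le_pow_iff_left₀ (norm_nonneg _) (norm_nonneg _) two_ne_zero).mp h4

/-- with `v* = (1/n)P*ᵀe`, `P*_v = P* − e v*ᵀ`, `L* = VᵀP*_v`:
`L*` is a local minimizer of `f_L` iff `P*_v` is a local minimizer of `f`,
which holds iff `P*` is a local minimizer of `f`. -/
theorem stmt_5 {n d : ℕ} (hn : 0 < n) (hd : 0 < d)
    (Pbar : Matrix (Fin n) (Fin d) ℝ) (hPbar : Pbarᵀ *ᵥ eV n = 0)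
    (V : Matrix (Fin n) (Fin (n - 1)) ℝ) (hV : Vᵀ * V = 1) (hVe : Vᵀ *ᵥ eV n = 0)
    (Pstar : Matrix (Fin n) (Fin d) ℝ)
    (vstar : Fin d → ℝ) (hvstar : vstar = ((n : ℝ)⁻¹) • (Pstarᵀ *ᵥ eV n))
    (Pv : Matrix (Fin n) (Fin d) ℝ) (hPv : Pv = Pstar - vecMulVec (eV n) vstar)
    (Lstar : Matrix (Fin (n - 1)) (Fin d) ℝ) (hLstar : Lstar = Vᵀ * Pv) :
    (IsLocMin (fun L => fObj Pbar (V * L)) Lstar ↔ IsLocMin (fObj Pbar) Pv) ∧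
    (IsLocMin (fObj Pbar) Pv ↔ IsLocMin (fObj Pbar) Pstar) := by
  have hn' : (n : ℝ) ≠ 0 := Nat.cast_ne_zero.mpr hn.ne'
  have hPs : Pstar = Pv + vecMulVec (eV n) vstar := by rw [hPv]; abel
  have iff2 : IsLocMin (fObj Pbar) Pv ↔ IsLocMin (fObj Pbar) Pstar := by
    have h := isLocMin_translate (fObj Pbar) (vecMulVec (eV n) vstar)
        (fun y => fObj_translate Pbar y vstar) Pv
    rwa [← hPs] at h
  have hsumP : ∀ j, vstar j = (n : ℝ)⁻¹ * ∑ i, Pstar i j := by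
    intro j
    rw [hvstar]
    simp [Matrix.mulVec, dotProduct, eV]
  have hPvE : ∀ j, ∑ i, Pv i j = 0 := by
    intro j
    simp only [hPv, Matrix.sub_apply, Matrix.vecMulVec_apply, eV, one_mul,
      Finset.sum_sub_distrib, Finset.sum_const, Finset.card_fin, nsmul_eq_mul, hsumP j]
    rw [← mul_assoc, mul_inv_cancel₀ hn', one_mul, sub_self]
  have hVLs : V * Lstar = Pv := by
    rw [hLstar, ← Matrix.mul_assoc, VVt_eq hn V hV hVe, Matrix.sub_mul, Matrix.one_mul,
      Matrix.smul_mul]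
    have h0 : vecMulVec (eV n) (eV n) * Pv = 0 := by
      ext i j
      simp [Matrix.mul_apply, Matrix.vecMulVec_apply, eV, hPvE j]
    rw [h0, smul_zero, sub_zero]
  have hfVVt : ∀ P : Matrix (Fin n) (Fin d) ℝ, fObj Pbar (V * (Vᵀ * P)) = fObj Pbar P := by
    intro P
    rw [← Matrix.mul_assoc, VVt_eq hn V hV hVe, Matrix.sub_mul, Matrix.one_mul,
      Matrix.smul_mul]
    have h5 : P - (n : ℝ)⁻¹ • (vecMulVec (eV n) (eV n) * P)
        = P + vecMulVec (eV n) (fun j => -((n : ℝ)⁻¹ * ∑ k, P k j)) := by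
      ext i j
      simp [Matrix.sub_apply, Matrix.add_apply, Matrix.smul_apply, Matrix.mul_apply,
        Matrix.vecMulVec_apply, eV]
      ring
    rw [h5, fObj_translate]
  have iff1 : IsLocMin (fun L => fObj Pbar (V * L)) Lstar ↔ IsLocMin (fObj Pbar) Pv := by
    constructor
    · rintro ⟨δ, hδ, h⟩
      refine ⟨δ, hδ, fun P hy => ?_⟩
      have hL : ‖Vᵀ * P - Lstar‖ ≤ δ := by
        have e1 : Vᵀ * P - Lstar = Vᵀ * (P - Pv) := by rw [hLstar, Matrix.mul_sub]
        rw [e1]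
        exact le_trans (norm_Vt_mul_le hn V hV hVe _) hy
      have h2 := h (Vᵀ * P) hL
      calc fObj Pbar Pv = fObj Pbar (V * Lstar) := by rw [hVLs]
        _ ≤ fObj Pbar (V * (Vᵀ * P)) := h2
        _ = fObj Pbar P := hfVVt P
    · rintro ⟨δ, hδ, h⟩
      refine ⟨δ, hδ, fun L hy => ?_⟩
      have hPle : ‖V * L - Pv‖ ≤ δ := by
        rw [← hVLs, ← Matrix.mul_sub, norm_V_mul V hV]
        exact hy
      calc fObj Pbar (V * Lstar) = fObj Pbar Pv := by rw [hVLs]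
        _ ≤ fObj Pbar (V * L) := h (V * L) hPle
  exact ⟨iff1, iff2⟩
end
end

section
/- Assume d ≤ n − 1 and let T = {L ∈ ℝ^{(n−1)×d} : L_{ij} = 0 whenever j > i} be the subspace of lower trapezoidal matrices. Suppose R ∈ T is a local minimizer of the restriction of f_L to T (there exists δ > 0 with f_L(R) ≤ f_L(L) for all L ∈ T with ‖L − R‖ ≤ δ), and suppose the first d rows of R are linearly independent. Then R is a local minimizer of f_L on all of ℝ^{(n−1)×d}. -/
set_option maxHeartbeats 1000000


open Matrix

attribute [local instance] Matrix.frobeniusNormedAddCommGroup Matrix.frobeniusNormedSpace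

noncomputable section

/-- QR existence via Gram–Schmidt: for any square matrix `A` there is an orthogonal `Q`
with `A * Q` lower triangular. -/
lemma qr_exists {d : ℕ} (A : Matrix (Fin d) (Fin d) ℝ) :
    ∃ Q : Matrix (Fin d) (Fin d) ℝ, Q * Qᵀ = 1 ∧ ∀ i j : Fin d, i < j → (A * Q) i j = 0 := by
  have h : Module.finrank ℝ (EuclideanSpace ℝ (Fin d)) = Fintype.card (Fin d) := by
    simp [finrank_euclideanSpace_fin]
  have hwf : WellFoundedLT (Fin d) := inferInstance
  set f : Fin d → EuclideanSpace ℝ (Fin d) := fun i => WithLp.toLp 2 (A i) with hf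
  set b := @InnerProductSpace.gramSchmidtOrthonormalBasis ℝ _ _ _ _ (Fin d) _ _ hwf _ _ h f with hb
  refine ⟨Matrix.of fun i j => b j i, ?_, ?_⟩
  · rw [mul_eq_one_comm]
    ext i j
    have hij := (orthonormal_iff_ite.mp b.orthonormal) i j
    rw [PiLp.inner_apply] at hij
    simp only [RCLike.inner_apply, conj_trivial] at hij
    simp only [Matrix.mul_apply, Matrix.transpose_apply, Matrix.of_apply, Matrix.one_apply]
    simpa only [mul_comm] using hij
  · intro i j hij
    have h0 := @InnerProductSpace.gramSchmidtOrthonormalBasis_inv_triangular ℝ _ _ _ _ (Fin d) _ _ hwf _ _ h f i j hij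
    rw [PiLp.inner_apply] at h0
    simp only [RCLike.inner_apply, conj_trivial] at h0
    simp only [Matrix.mul_apply, Matrix.of_apply]
    calc ∑ k, A i k * b j k = ∑ k, b j k * f i k := by
          simp [hf, mul_comm]
      _ = 0 := by simpa only [← hb, mul_comm] using h0

/-- Invariance of `fObj` under right multiplication by an orthogonal matrix. -/
lemma fObj_mul_orth {n d : ℕ} (Pbar P : Matrix (Fin n) (Fin d) ℝ)
    (Q : Matrix (Fin d) (Fin d) ℝ) (hQ : Q * Qᵀ = 1) :
    fObj Pbar (P * Q) = fObj Pbar P := by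
  have hPP : (P * Q) * (P * Q)ᵀ = P * Pᵀ := by
    rw [Matrix.transpose_mul, Matrix.mul_assoc, ← Matrix.mul_assoc Q, hQ, Matrix.one_mul]
  rw [fObj, fObj, Fm, Fm, hPP]

/-- The set of orthogonal matrices is compact. -/
lemma orth_compact (d : ℕ) :
    IsCompact {Q : Matrix (Fin d) (Fin d) ℝ | Q * Qᵀ = 1} := by
  refine Metric.isCompact_of_isClosed_isBounded ?_ ?_
  · have hcont : Continuous fun Q : Matrix (Fin d) (Fin d) ℝ => Q * Qᵀ :=
      Continuous.matrix_mul continuous_id (Continuous.matrix_transpose continuous_id)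
    have : {Q : Matrix (Fin d) (Fin d) ℝ | Q * Qᵀ = 1}
        = (fun Q : Matrix (Fin d) (Fin d) ℝ => Q * Qᵀ) ⁻¹' {1} := rfl
    rw [this]
    exact IsClosed.preimage hcont isClosed_singleton
  · rw [Metric.isBounded_iff_subset_closedBall 0]
    refine ⟨(d : ℝ) ^ (1/2 : ℝ), fun Q hQ => ?_⟩
    have hQ' : Q * Qᵀ = 1 := hQ
    rw [Metric.mem_closedBall, dist_zero_right]
    have hrow : ∀ i : Fin d, (∑ j, ‖Q i j‖ ^ (2 : ℝ)) = (1 : ℝ) := by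
      intro i
      have h1 : (Q * Qᵀ) i i = (1 : Matrix (Fin d) (Fin d) ℝ) i i := by rw [hQ']
      simp only [Matrix.mul_apply, Matrix.transpose_apply, Matrix.one_apply_eq] at h1
      calc (∑ j, ‖Q i j‖ ^ (2 : ℝ)) = ∑ j, Q i j * Q i j := by
            simp [Real.rpow_two, Real.norm_eq_abs, sq_abs, sq]
        _ = 1 := h1
    have hsum : (∑ i : Fin d, ∑ j, ‖Q i j‖ ^ (2 : ℝ)) = (d : ℝ) := by
      rw [Finset.sum_congr rfl fun i _ => hrow i]
      simp
    rw [Matrix.frobenius_norm_def, hsum]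

/-- A lower-triangular orthogonal matrix is diagonal. -/
lemma lowerTri_orth_diag {d : ℕ} (Q : Matrix (Fin d) (Fin d) ℝ) (hQ : Q * Qᵀ = 1)
    (hlow : ∀ i j : Fin d, i < j → Q i j = 0) :
    ∀ i j : Fin d, i ≠ j → Q i j = 0 := by
  haveI : Invertible Q := invertibleOfRightInverse Q Qᵀ hQ
  have hinv : Q⁻¹ = Qᵀ := Matrix.inv_eq_right_inv hQ
  have hbt : Q.BlockTriangular (OrderDual.toDual : Fin d → (Fin d)ᵒᵈ) := by
    intro i j hji
    exact hlow i j (by exact_mod_cast hji)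
  have hbt' : (Q⁻¹).BlockTriangular (OrderDual.toDual : Fin d → (Fin d)ᵒᵈ) :=
    Matrix.blockTriangular_inv_of_blockTriangular hbt
  rw [hinv] at hbt'
  intro i j hij
  rcases lt_or_gt_of_ne hij with h | h
  · exact hlow i j h
  · have := hbt' (show (OrderDual.toDual : Fin d → (Fin d)ᵒᵈ) i < OrderDual.toDual j by
      exact_mod_cast h)
    simpa using this

theorem stmt_7 {n d : ℕ} (hn : 0 < n) (hd : 0 < d) (hdn : d ≤ n - 1)
    (Pbar : Matrix (Fin n) (Fin d) ℝ) (hPbar : Pbarᵀ *ᵥ eV n = 0)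
    (V : Matrix (Fin n) (Fin (n - 1)) ℝ) (hV : Vᵀ * V = 1) (hVe : Vᵀ *ᵥ eV n = 0)
    (R : Matrix (Fin (n - 1)) (Fin d) ℝ)
    (hT : ∀ (i : Fin (n - 1)) (j : Fin d), (i : ℕ) < (j : ℕ) → R i j = 0)
    (hloc : ∃ δ > 0, ∀ L : Matrix (Fin (n - 1)) (Fin d) ℝ,
      (∀ (i : Fin (n - 1)) (j : Fin d), (i : ℕ) < (j : ℕ) → L i j = 0) →
      ‖L - R‖ ≤ δ → fObj Pbar (V * R) ≤ fObj Pbar (V * L))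
    (hind : LinearIndependent ℝ (fun i : Fin d => R (Fin.castLE hdn i))) :
    IsLocMin (fun L => fObj Pbar (V * L)) R := by
  obtain ⟨δ, hδ, hmin⟩ := hloc
  by_contra hc
  rw [IsLocMin] at hc
  push_neg at hc
  -- build a sequence of counterexamples tending to R
  have hseq : ∀ k : ℕ, ∃ L : Matrix (Fin (n - 1)) (Fin d) ℝ,
      ‖L - R‖ ≤ 1 / ((k : ℝ) + 1) ∧ fObj Pbar (V * L) < fObj Pbar (V * R) := by
    intro k
    obtain ⟨y, hy1, hy2⟩ := hc (1 / ((k : ℝ) + 1)) (by positivity)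
    exact ⟨y, hy1, hy2⟩
  choose L hL1 hL2 using hseq
  have hLtend : Filter.Tendsto L Filter.atTop (nhds R) := by
    refine tendsto_iff_norm_sub_tendsto_zero.mpr ?_
    exact squeeze_zero (fun k => norm_nonneg _) hL1 tendsto_one_div_add_atTop_nhds_zero_nat
  -- QR decomposition of the top d×d block of each L k
  have hqr : ∀ k : ℕ, ∃ Q : Matrix (Fin d) (Fin d) ℝ, Q * Qᵀ = 1 ∧
      ∀ i j : Fin d, i < j → (((L k).submatrix (Fin.castLE hdn) id) * Q) i j = 0 :=
    fun k => qr_exists _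
  choose Q hQorth hQtri using hqr
  -- each L k * Q k is trapezoidal
  have hTtrap : ∀ k (i : Fin (n - 1)) (j : Fin d), (i : ℕ) < (j : ℕ) → (L k * Q k) i j = 0 := by
    intro k i j hij
    have hid : (i : ℕ) < d := lt_trans hij j.isLt
    set i' : Fin d := ⟨(i : ℕ), hid⟩ with hi'
    have hcast : Fin.castLE hdn i' = i := Fin.ext rfl
    have h0 := hQtri k i' j (show i' < j from hij)
    simp only [Matrix.mul_apply, Matrix.submatrix_apply, id_eq, hcast] at h0 ⊢
    exact h0
  -- extract a convergent subsequence of the Q k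
  haveI : FirstCountableTopology (Matrix (Fin d) (Fin d) ℝ) :=
    inferInstanceAs (FirstCountableTopology (Fin d → Fin d → ℝ))
  obtain ⟨Ql, hQl, φ, hφ, hQtend⟩ := (orth_compact d).tendsto_subseq hQorth
  have hQlorth : Ql * Qlᵀ = 1 := hQl
  -- the products tend to R * Ql
  have hTmul : Filter.Tendsto (fun k => L (φ k) * Q (φ k)) Filter.atTop (nhds (R * Ql)) := by
    have hpair : Filter.Tendsto (fun k => (L (φ k), Q (φ k))) Filter.atTop (nhds (R, Ql)) :=
      (hLtend.comp hφ.tendsto_atTop).prodMk_nhds hQtend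
    have hmul : Continuous fun p : Matrix (Fin (n-1)) (Fin d) ℝ × Matrix (Fin d) (Fin d) ℝ =>
        p.1 * p.2 := Continuous.matrix_mul continuous_fst continuous_snd
    exact (hmul.tendsto (R, Ql)).comp hpair
  -- R * Ql is trapezoidal
  have hRQtrap : ∀ (i : Fin (n - 1)) (j : Fin d), (i : ℕ) < (j : ℕ) → (R * Ql) i j = 0 := by
    intro i j hij
    have hcont : Continuous fun M : Matrix (Fin (n-1)) (Fin d) ℝ => M i j :=
      Continuous.matrix_elem continuous_id i j
    have h1 : Filter.Tendsto (fun k => (L (φ k) * Q (φ k)) i j) Filter.atTop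
        (nhds ((R * Ql) i j)) := (hcont.tendsto _).comp hTmul
    have h2 : (fun k => (L (φ k) * Q (φ k)) i j) = fun _ => (0 : ℝ) :=
      funext fun k => hTtrap (φ k) i j hij
    rw [h2] at h1
    exact (tendsto_nhds_unique h1 tendsto_const_nhds)
  -- the top block of R
  set A : Matrix (Fin d) (Fin d) ℝ := R.submatrix (Fin.castLE hdn) id with hA
  have hAunit : IsUnit A := Matrix.linearIndependent_rows_iff_isUnit.mp hind
  have hAdet : IsUnit A.det := (Matrix.isUnit_iff_isUnit_det A).mp hAunit
  haveI : Invertible A := A.invertibleOfIsUnitDet hAdet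
  -- A is lower triangular
  have hAlow : A.BlockTriangular (OrderDual.toDual : Fin d → (Fin d)ᵒᵈ) := by
    intro i j hji
    exact hT (Fin.castLE hdn i) j (by exact_mod_cast hji)
  -- A * Ql is lower triangular
  have hAQlow : (A * Ql).BlockTriangular (OrderDual.toDual : Fin d → (Fin d)ᵒᵈ) := by
    intro i j hji
    have hij : (i : ℕ) < (j : ℕ) := by exact_mod_cast hji
    have := hRQtrap (Fin.castLE hdn i) j hij
    simp only [Matrix.mul_apply, Matrix.submatrix_apply, id_eq, hA] at this ⊢
    exact this
  -- hence Ql is lower triangular: Ql = A⁻¹ * (A * Ql)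
  have hQllow' : Ql.BlockTriangular (OrderDual.toDual : Fin d → (Fin d)ᵒᵈ) := by
    have h1 : Ql = A⁻¹ * (A * Ql) := by
      rw [← Matrix.mul_assoc, Matrix.nonsing_inv_mul A hAdet, Matrix.one_mul]
    rw [h1]
    exact (Matrix.blockTriangular_inv_of_blockTriangular hAlow).mul hAQlow
  have hQllow : ∀ i j : Fin d, i < j → Ql i j = 0 := by
    intro i j hij
    exact hQllow' (show (OrderDual.toDual : Fin d → (Fin d)ᵒᵈ) j < OrderDual.toDual i by
      exact_mod_cast hij)
  -- Ql is diagonal, symmetric, and an involution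
  have hQldiag : ∀ i j : Fin d, i ≠ j → Ql i j = 0 := lowerTri_orth_diag Ql hQlorth hQllow
  have hQlsymm : Qlᵀ = Ql := by
    ext i j
    by_cases hij : i = j
    · subst hij; rfl
    · rw [Matrix.transpose_apply, hQldiag j i (Ne.symm hij), hQldiag i j hij]
  have hQlsq : Ql * Ql = 1 := by
    rw [show Ql * Ql = Ql * Qlᵀ by rw [hQlsymm]]
    exact hQlorth
  -- L (φ k) * Q (φ k) * Ql tends to R
  have hfinal : Filter.Tendsto (fun k => L (φ k) * Q (φ k) * Ql) Filter.atTop (nhds R) := by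
    have hcont : Continuous fun M : Matrix (Fin (n-1)) (Fin d) ℝ => M * Ql :=
      Continuous.matrix_mul continuous_id continuous_const
    have h1 := (hcont.tendsto (R * Ql)).comp hTmul
    have h2 : R * Ql * Ql = R := by rw [Matrix.mul_assoc, hQlsq, Matrix.mul_one]
    rw [h2] at h1
    exact h1
  -- choose k with the product within δ of R
  obtain ⟨N, hN⟩ := (Metric.tendsto_atTop.mp hfinal) δ hδ
  set L' : Matrix (Fin (n - 1)) (Fin d) ℝ := L (φ N) * Q (φ N) * Ql with hL'
  have hL'trap : ∀ (i : Fin (n - 1)) (j : Fin d), (i : ℕ) < (j : ℕ) → L' i j = 0 := by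
    intro i j hij
    rw [hL', Matrix.mul_apply]
    apply Finset.sum_eq_zero
    intro m _
    by_cases hm : m = j
    · subst hm; rw [hTtrap (φ N) i m hij, zero_mul]
    · rw [hQldiag m j hm, mul_zero]
  have hL'close : ‖L' - R‖ ≤ δ := by
    have := hN N le_rfl
    rw [dist_eq_norm] at this
    exact le_of_lt this
  have hge := hmin L' hL'trap hL'close
  -- but fObj Pbar (V * L') = fObj Pbar (V * L (φ N))
  have horth : (Q (φ N) * Ql) * (Q (φ N) * Ql)ᵀ = 1 := by
    rw [Matrix.transpose_mul, Matrix.mul_assoc, ← Matrix.mul_assoc Ql, hQlorth,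
      Matrix.one_mul, hQorth]
  have heq : fObj Pbar (V * L') = fObj Pbar (V * L (φ N)) := by
    have h1 : V * L' = (V * L (φ N)) * (Q (φ N) * Ql) := by
      rw [hL']
      simp only [Matrix.mul_assoc]
    rw [h1]
    exact fObj_mul_orth Pbar (V * L (φ N)) (Q (φ N) * Ql) horth
  rw [heq] at hge
  exact absurd hge (not_le.mpr (hL2 (φ N)))
end
end

section
/- For every P ∈ ℝ^{n×d} and every w ∈ ℝ^d: (i) the Fréchet derivative of f at P in the direction e wᵀ vanishes, f′(P)(e wᵀ) = 0; and (ii) the second Fréchet derivative of f at P satisfies f″(P)(e wᵀ, ΔP) = 0 for every ΔP ∈ ℝ^{n×d}. -/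
open Matrix

attribute [local instance] Matrix.frobeniusNormedAddCommGroup Matrix.frobeniusNormedSpace

noncomputable section

lemma frob_sq {n m : ℕ} (A : Matrix (Fin n) (Fin m) ℝ) : ‖A‖^2 = ∑ i, ∑ j, (A i j)^2 := by
  rw [Matrix.frobenius_norm_def]
  rw [← Real.rpow_natCast _ 2, ← Real.rpow_mul (by positivity)]
  norm_num

-- entry evaluation as a linear map
def entryL {n d : ℕ} (a : Fin n) (b : Fin d) : Matrix (Fin n) (Fin d) ℝ →ₗ[ℝ] ℝ where
  toFun P := P a b
  map_add' _ _ := rfl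
  map_smul' _ _ := rfl

lemma entry_contDiff {n d : ℕ} (a : Fin n) (b : Fin d) :
    ContDiff ℝ (⊤ : ℕ∞) (fun P : Matrix (Fin n) (Fin d) ℝ => P a b) :=
  (LinearMap.toContinuousLinearMap (entryL a b)).contDiff

lemma fObj_eq {n d : ℕ} (Pbar : Matrix (Fin n) (Fin d) ℝ) : fObj Pbar = fun P =>
    (1/2) * ∑ i, ∑ j, ((∑ k, P i k * P i k) + (∑ k, P j k * P j k)
      - 2 * (∑ k, P i k * P j k) - Kop (Pbar * Pbarᵀ) i j)^2 := by
  funext P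
  rw [fObj, frob_sq]
  congr 1
  refine Finset.sum_congr rfl fun i _ => Finset.sum_congr rfl fun j _ => ?_
  congr 1
  simp only [Fm, Kop, Matrix.sub_apply, Matrix.add_apply, vecMulVec_apply, Matrix.smul_apply,
    Matrix.diag, Matrix.mul_apply, Matrix.transpose_apply, eV, smul_eq_mul, one_mul, mul_one]

lemma fObj_contDiff {n d : ℕ} (Pbar : Matrix (Fin n) (Fin d) ℝ) :
    ContDiff ℝ (⊤ : ℕ∞) (fObj Pbar) := by
  rw [fObj_eq]
  exact contDiff_const.mul (ContDiff.sum fun i _ => ContDiff.sum fun j _ =>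
    ((((ContDiff.sum fun k _ => (entry_contDiff i k).mul (entry_contDiff i k)).add
      (ContDiff.sum fun k _ => (entry_contDiff j k).mul (entry_contDiff j k))).sub
      (contDiff_const.mul (ContDiff.sum fun k _ => (entry_contDiff i k).mul (entry_contDiff j k)))).sub
      contDiff_const).pow 2)

lemma dir_zero {E F : Type*} [NormedAddCommGroup E] [NormedSpace ℝ E]
    [NormedAddCommGroup F] [NormedSpace ℝ F] {h : E → F} {P v : E}
    (hd : DifferentiableAt ℝ h P) (hinv : ∀ t : ℝ, h (P + t • v) = h P) :
    fderiv ℝ h P v = 0 := by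
  have hL : HasDerivAt (fun t : ℝ => P + t • v) v 0 := by
    simpa using ((hasDerivAt_id (0:ℝ)).smul_const v).const_add P
  have hcomp : HasDerivAt (fun t : ℝ => h (P + t • v)) (fderiv ℝ h P v) 0 := by
    have hfd : HasFDerivAt h (fderiv ℝ h P) (P + (0:ℝ) • v) := by simpa using hd.hasFDerivAt
    have := hfd.comp_hasDerivAt (0:ℝ) hL
    exact this
  rw [funext hinv] at hcomp
  exact hcomp.unique (hasDerivAt_const _ _)

lemma Kop_inv {n d : ℕ} (Q : Matrix (Fin n) (Fin d) ℝ) (w : Fin d → ℝ) :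
    Kop ((Q + vecMulVec (eV n) w) * (Q + vecMulVec (eV n) w)ᵀ) = Kop (Q * Qᵀ) := by
  ext i j
  simp only [Kop, vecMulVec_apply, Matrix.diag, Matrix.sub_apply, Matrix.add_apply,
    Matrix.smul_apply, Matrix.mul_apply, Matrix.transpose_apply, eV, Pi.add_apply,
    smul_eq_mul]
  simp only [Finset.sum_add_distrib, add_mul, mul_add, one_mul, mul_one]
  have h1 : ∀ v u : Fin d → ℝ, ∑ x, v x * u x = ∑ x, u x * v x :=
    fun v u => Finset.sum_congr rfl (fun x _ => mul_comm _ _)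
  ring_nf
  simp only [pow_two]
  rw [h1 w (Q i), h1 w (Q j)]
  ring

lemma fObj_inv {n d : ℕ} (Pbar Q : Matrix (Fin n) (Fin d) ℝ) (w : Fin d → ℝ) :
    fObj Pbar (Q + vecMulVec (eV n) w) = fObj Pbar Q := by
  unfold fObj Fm
  rw [Kop_inv]

lemma vecMulVec_smul_right {n d : ℕ} (t : ℝ) (v : Fin n → ℝ) (w : Fin d → ℝ) :
    vecMulVec v (t • w) = t • vecMulVec v w := by
  ext i j; simp [vecMulVec_apply, mul_comm, mul_left_comm]

lemma fderiv_fObj_inv {n d : ℕ} (Pbar Q : Matrix (Fin n) (Fin d) ℝ) (w : Fin d → ℝ) :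
    fderiv ℝ (fObj Pbar) (Q + vecMulVec (eV n) w) = fderiv ℝ (fObj Pbar) Q := by
  have hdiff := (fObj_contDiff Pbar).differentiable (by simp)
  have h1 : HasFDerivAt (fun x : Matrix (Fin n) (Fin d) ℝ => x + vecMulVec (eV n) w)
      (ContinuousLinearMap.id ℝ _) Q := by
    exact (hasFDerivAt_id Q).add_const (vecMulVec (eV n) w)
  have h2 := ((hdiff (Q + vecMulVec (eV n) w)).hasFDerivAt.comp Q h1)
  have h3 : (fObj Pbar ∘ fun x => x + vecMulVec (eV n) w) = fObj Pbar :=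
    funext fun x => fObj_inv Pbar x w
  rw [h3] at h2
  rw [show fderiv ℝ (fObj Pbar) Q = _ from h2.fderiv]
  ext ΔP
  rfl


/-- for every `P` and `w`, `f′(P)(e wᵀ) = 0` and `f″(P)(e wᵀ, ΔP) = 0`
for every `ΔP`. -/
theorem stmt_8 {n d : ℕ} (hn : 0 < n) (hd : 0 < d)
    (Pbar : Matrix (Fin n) (Fin d) ℝ) (hPbar : Pbarᵀ *ᵥ eV n = 0)
    (P : Matrix (Fin n) (Fin d) ℝ) (w : Fin d → ℝ) :
    fderiv ℝ (fObj Pbar) P (vecMulVec (eV n) w) = 0 ∧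
    ∀ ΔP : Matrix (Fin n) (Fin d) ℝ,
      fderiv ℝ (fderiv ℝ (fObj Pbar)) P (vecMulVec (eV n) w) ΔP = 0 := by
  have hsm := fObj_contDiff Pbar
  have hdiff := hsm.differentiable (by simp)
  have hg : ContDiff ℝ (⊤ : ℕ∞) (@fderiv ℝ _ (Matrix (Fin n) (Fin d) ℝ) frobeniusNormedAddCommGroup.toAddCommGroup
      frobeniusNormedSpace.toModule PseudoMetricSpace.toUniformSpace.toTopologicalSpace ℝ _ _ _ (fObj Pbar)) :=
    hsm.fderiv_right (mod_cast le_top)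
  constructor
  · apply dir_zero (hdiff P)
    intro t
    rw [← vecMulVec_smul_right, fObj_inv]
  · intro ΔP
    have h0 : fderiv ℝ (fderiv ℝ (fObj Pbar)) P (vecMulVec (eV n) w) = 0 := by
      apply dir_zero ((hg.differentiable (by simp)) P)
      intro t
      rw [← vecMulVec_smul_right]
      exact fderiv_fObj_inv Pbar P (t • w)
    rw [h0]
    rfl
end
end

section
/- If D̄ = 0, then every stationary point of f is a global minimizer: any P ∈ ℝ^{n×d} with K*(F(P))P = 0 satisfies F(P) = 0. -/
open Matrix

attribute [local instance] Matrix.frobeniusNormedAddCommGroup Matrix.frobeniusNormedSpace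

noncomputable section

/-! `K*` is the adjoint of `K` on symmetric matrices. With `D̄ = 0` the residual `S = F(P) = K(PPᵀ)`
is symmetric, so `‖S‖² = ⟨S, K(PPᵀ)⟩ = tr(K*(S) P Pᵀ)`, and stationarity `K*(S) P = 0` kills the
right-hand side. -/

theorem Matrix.trace_diagonal_mul {ι R : Type*} [Fintype ι] [DecidableEq ι]
    [NonUnitalNonAssocSemiring R] (v : ι → R) (G : Matrix ι ι R) :
    trace (diagonal v * G) = v ⬝ᵥ G.diag := by
  simp [trace, dotProduct]

theorem Matrix.isSymm_mul_transpose {m ι α : Type*} [Fintype m] [NonUnitalCommSemiring α]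
    (P : Matrix ι m α) : (P * Pᵀ).IsSymm := by
  rw [IsSymm, transpose_mul, transpose_transpose]

theorem Kop_isSymm {n : ℕ} {G : Matrix (Fin n) (Fin n) ℝ} (hG : G.IsSymm) : (Kop G).IsSymm := by
  simp only [IsSymm, Kop, transpose_add, transpose_sub, transpose_smul, transpose_vecMulVec, hG.eq]
  abel

theorem trace_transpose_mul_Kop {n : ℕ} {S : Matrix (Fin n) (Fin n) ℝ} (hS : S.IsSymm)
    (G : Matrix (Fin n) (Fin n) ℝ) : trace (Sᵀ * Kop G) = trace (Kstar S * G) := by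
  have hswap : S *ᵥ G.diag ⬝ᵥ eV n = S *ᵥ eV n ⬝ᵥ G.diag := by
    rw [dotProduct_comm, dotProduct_mulVec, ← mulVec_transpose, hS.eq]
  simp only [Kop, Kstar, Matrix.mul_add, Matrix.mul_sub, Matrix.mul_smul, Matrix.smul_mul,
    Matrix.sub_mul, trace_add, trace_sub, trace_smul, Matrix.mul_vecMulVec, trace_vecMulVec,
    trace_diagonal_mul, hS.eq, hswap, smul_eq_mul]
  ring

theorem stmt_13_general {n d : ℕ}
    (Pbar : Matrix (Fin n) (Fin d) ℝ)
    (hD : Kop (Pbar * Pbarᵀ) = 0)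
    (P : Matrix (Fin n) (Fin d) ℝ) (hstat : Kstar (Fm Pbar P) * P = 0) :
    Fm Pbar P = 0 := by
  rw [Fm, hD, sub_zero] at hstat ⊢
  have hsymm := Kop_isSymm (isSymm_mul_transpose P)
  rw [← trace_conjTranspose_mul_self_eq_zero_iff, conjTranspose_eq_transpose_of_trivial,
    trace_transpose_mul_Kop hsymm, ← Matrix.mul_assoc, hstat, Matrix.zero_mul, trace_zero]

/-- if `D̄ = 0` then every stationary point of `f` is a global minimizer. -/
theorem stmt_13 {n d : ℕ} (hn : 0 < n) (hd : 0 < d)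
    (Pbar : Matrix (Fin n) (Fin d) ℝ) (hPbar : Pbarᵀ *ᵥ eV n = 0)
    (hD : Kop (Pbar * Pbarᵀ) = 0)
    (P : Matrix (Fin n) (Fin d) ℝ) (hstat : Kstar (Fm Pbar P) * P = 0) :
    Fm Pbar P = 0 :=
  stmt_13_general Pbar hD P hstat
end
end

section
/- Suppose D̄ ≠ 0 and P ∈ ℝ^{n×d} satisfies K(PPᵀ) = 0 (equivalently, all rows of P are equal). Then P is a stationary point of f (K*(F(P))P = 0), the Hessian quadratic form of f at P is negative semidefinite (Q_P(ΔP) ≤ 0 for all ΔP ∈ ℝ^{n×d}), and it is not identically zero: there exists ΔP ∈ ℝ^{n×d} with Q_P(ΔP) < 0. -/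
open Matrix

attribute [local instance] Matrix.frobeniusNormedAddCommGroup Matrix.frobeniusNormedSpace

noncomputable section

/-!
If `K(PPᵀ) = 0` then all rows of `P` equal some `p`, so `P = e pᵀ`. Since `K*(S)` has zero
row sums, `K*(S) e = 0` and `P` is stationary. The first-order perturbation
`PΔPᵀ + ΔPPᵀ = e (ΔP p)ᵀ + (ΔP p) eᵀ` lies in the kernel of `K`, and `F(P) = -D̄`, so
`Q_P(ΔP) = -2⟨D̄, K(ΔPΔPᵀ)⟩`. Both `D̄` and `K(ΔPΔPᵀ)` are entrywise nonnegative
(squared distances between rows), hence `Q_P ≤ 0`, and `ΔP = P̄` gives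
`Q_P(P̄) = -2‖D̄‖² < 0`.
-/

theorem trace_transpose_mul_nonneg {m n R : Type*} [Fintype m] [Fintype n] [Semiring R]
    [PartialOrder R] [IsOrderedRing R] {A B : Matrix m n R}
    (hA : ∀ i j, 0 ≤ A i j) (hB : ∀ i j, 0 ≤ B i j) : 0 ≤ trace (Aᵀ * B) :=
  Finset.sum_nonneg fun _ _ => Finset.sum_nonneg fun _ _ => mul_nonneg (hA _ _) (hB _ _)

section Lindenstrauss

variable {n d : ℕ}

theorem kop_apply (G : Matrix (Fin n) (Fin n) ℝ) (i j : Fin n) :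
    Kop G i j = G i i + G j j - 2 * G i j := by
  simp [Kop, vecMulVec_apply, eV]

theorem kop_mul_transpose_apply (Q : Matrix (Fin n) (Fin d) ℝ) (i j : Fin n) :
    Kop (Q * Qᵀ) i j = (Q i - Q j) ⬝ᵥ (Q i - Q j) := by
  simp only [kop_apply, mul_apply, transpose_apply, dotProduct, Pi.sub_apply, Finset.mul_sum,
    ← Finset.sum_add_distrib, ← Finset.sum_sub_distrib]
  exact Finset.sum_congr rfl fun _ _ => by ring

theorem kop_mul_transpose_nonneg (Q : Matrix (Fin n) (Fin d) ℝ) (i j : Fin n) :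
    0 ≤ Kop (Q * Qᵀ) i j := by
  rw [kop_mul_transpose_apply]
  exact Finset.sum_nonneg fun _ _ => mul_self_nonneg _

theorem kop_mul_transpose_eq_zero_iff (Q : Matrix (Fin n) (Fin d) ℝ) :
    Kop (Q * Qᵀ) = 0 ↔ ∀ i j, Q i = Q j := by
  simp only [← Matrix.ext_iff, Matrix.zero_apply, kop_mul_transpose_apply,
    dotProduct_self_eq_zero, sub_eq_zero]

theorem kop_eq_zero_of_apply_eq_add {G : Matrix (Fin n) (Fin n) ℝ} (c : Fin n → ℝ)
    (hG : ∀ i j, G i j = c i + c j) : Kop G = 0 := by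
  ext i j
  rw [kop_apply, hG, hG, hG, Matrix.zero_apply]
  ring

theorem kop_mul_transpose_add_eq_zero_of_rows_eq {P : Matrix (Fin n) (Fin d) ℝ}
    (hP : ∀ i j, P i = P j) (ΔP : Matrix (Fin n) (Fin d) ℝ) :
    Kop (P * ΔPᵀ + ΔP * Pᵀ) = 0 :=
  kop_eq_zero_of_apply_eq_add (fun k => ΔP k ⬝ᵥ P k) fun i j => by
    simp only [Matrix.add_apply, mul_apply', transpose_apply]
    rw [hP i j, hP j i, dotProduct_comm, add_comm]

theorem kstar_mulVec_eV (S : Matrix (Fin n) (Fin n) ℝ) : Kstar S *ᵥ eV n = 0 := by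
  have hdiag : diagonal (S *ᵥ eV n) *ᵥ eV n = S *ᵥ eV n := by
    ext i
    simp [mulVec_diagonal, eV]
  rw [Kstar, smul_mulVec, sub_mulVec, hdiag, sub_self, smul_zero]

theorem kstar_mul_eq_zero_of_rows_eq (S : Matrix (Fin n) (Fin n) ℝ)
    {P : Matrix (Fin n) (Fin d) ℝ}
    (hP : ∀ i j, P i = P j) : Kstar S * P = 0 := by
  ext i k
  have hrow : (Kstar S * P) i k = (Kstar S *ᵥ eV n) i * P i k := by
    simp only [mul_apply, mulVec, dotProduct, eV, mul_one, Finset.sum_mul, hP _ i]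
  rw [hrow, kstar_mulVec_eV, Pi.zero_apply, zero_mul, Matrix.zero_apply]

theorem qForm_of_kop_eq_zero {Pbar P : Matrix (Fin n) (Fin d) ℝ} (hP : Kop (P * Pᵀ) = 0)
    (ΔP : Matrix (Fin n) (Fin d) ℝ) :
    QForm Pbar P ΔP = -2 * trace ((Kop (Pbar * Pbarᵀ))ᵀ * Kop (ΔP * ΔPᵀ)) := by
  rw [QForm, kop_mul_transpose_add_eq_zero_of_rows_eq ((kop_mul_transpose_eq_zero_iff P).1 hP),
    Fm, hP, zero_sub, transpose_neg, neg_mul, trace_neg, norm_zero]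
  ring

end Lindenstrauss

theorem stmt_14_general {n d : ℕ}
    (Pbar : Matrix (Fin n) (Fin d) ℝ)
    (hD : Kop (Pbar * Pbarᵀ) ≠ 0)
    (P : Matrix (Fin n) (Fin d) ℝ) (hP : Kop (P * Pᵀ) = 0) :
    Kstar (Fm Pbar P) * P = 0 ∧
    (∀ ΔP : Matrix (Fin n) (Fin d) ℝ, QForm Pbar P ΔP ≤ 0) ∧
    (∃ ΔP : Matrix (Fin n) (Fin d) ℝ, QForm Pbar P ΔP < 0) := by
  set D := Kop (Pbar * Pbarᵀ)
  have hrows := (kop_mul_transpose_eq_zero_iff P).1 hP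
  have hinner_nonneg (ΔP : Matrix (Fin n) (Fin d) ℝ) : 0 ≤ trace (Dᵀ * Kop (ΔP * ΔPᵀ)) :=
    trace_transpose_mul_nonneg (kop_mul_transpose_nonneg Pbar) (kop_mul_transpose_nonneg ΔP)
  have hinner_ne : trace (Dᵀ * D) ≠ 0 := by
    rwa [← conjTranspose_eq_transpose_of_trivial, Ne, trace_conjTranspose_mul_self_eq_zero_iff]
  refine ⟨kstar_mul_eq_zero_of_rows_eq _ hrows, fun ΔP => ?_, Pbar, ?_⟩
  · rw [qForm_of_kop_eq_zero hP]
    linarith [hinner_nonneg ΔP]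
  · rw [qForm_of_kop_eq_zero hP]
    linarith [lt_of_le_of_ne (hinner_nonneg Pbar) hinner_ne.symm]

/-- if `D̄ ≠ 0` and `K(PPᵀ) = 0`, then `P` is a stationary point,
the Hessian quadratic form at `P` is negative semidefinite, and it is nonzero. -/
theorem stmt_14 {n d : ℕ} (hn : 0 < n) (hd : 0 < d)
    (Pbar : Matrix (Fin n) (Fin d) ℝ) (hPbar : Pbarᵀ *ᵥ eV n = 0)
    (hD : Kop (Pbar * Pbarᵀ) ≠ 0)
    (P : Matrix (Fin n) (Fin d) ℝ) (hP : Kop (P * Pᵀ) = 0) :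
    Kstar (Fm Pbar P) * P = 0 ∧
    (∀ ΔP : Matrix (Fin n) (Fin d) ℝ, QForm Pbar P ΔP ≤ 0) ∧
    (∃ ΔP : Matrix (Fin n) (Fin d) ℝ, QForm Pbar P ΔP < 0) :=
  stmt_14_general Pbar hD P hP
end
end

section
/- If P ∈ ℝ^{n×d} is a local maximizer of f, i.e., there exists δ > 0 such that f(P) ≥ f(P′) for all P′ with ‖P′ − P‖ ≤ δ, then K(PPᵀ) = 0. -/
open Matrix

attribute [local instance] Matrix.frobeniusNormedAddCommGroup Matrix.frobeniusNormedSpace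

noncomputable section

lemma frob_norm_sq {n : ℕ} (M : Matrix (Fin n) (Fin n) ℝ) :
    ‖M‖ ^ 2 = ∑ i, ∑ j, (M i j) ^ 2 := by
  rw [Matrix.frobenius_norm_def, ← Real.rpow_natCast _ 2, ← Real.rpow_mul (by positivity)]
  norm_num [Real.rpow_two, sq_abs]

lemma Kop_smul {n : ℕ} (c : ℝ) (G : Matrix (Fin n) (Fin n) ℝ) :
    Kop (c • G) = c • Kop G := by
  ext i j
  simp [Kop, vecMulVec_apply, Matrix.diag, eV]
  ring

lemma smul_mul_smul_transpose {n d : ℕ} (c : ℝ) (P : Matrix (Fin n) (Fin d) ℝ) :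
    (c • P) * (c • P)ᵀ = (c ^ 2) • (P * Pᵀ) := by
  ext i j
  simp only [Matrix.mul_apply, transpose_apply, Matrix.smul_apply, smul_eq_mul, Finset.mul_sum]
  exact Finset.sum_congr rfl fun k _ => by ring

/-- a local maximizer `P` of `f` satisfies `K(PPᵀ) = 0`. -/
theorem stmt_15 {n d : ℕ} (hn : 0 < n) (hd : 0 < d)
    (Pbar : Matrix (Fin n) (Fin d) ℝ) (hPbar : Pbarᵀ *ᵥ eV n = 0)
    (P : Matrix (Fin n) (Fin d) ℝ)
    (hmax : ∃ δ > 0, ∀ P' : Matrix (Fin n) (Fin d) ℝ,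
      ‖P' - P‖ ≤ δ → fObj Pbar P' ≤ fObj Pbar P) :
    Kop (P * Pᵀ) = 0 := by
  obtain ⟨δ, hδ, hloc⟩ := hmax
  by_cases hP0 : P = 0
  · subst hP0
    ext i j
    simp [Kop, vecMulVec_apply, Matrix.diag]
  -- notation
  set A := Kop (P * Pᵀ) with hA
  set B := Kop (Pbar * Pbarᵀ) with hB
  set Sa := ∑ i, ∑ j, (A i j) ^ 2 with hSa
  set Iab := ∑ i, ∑ j, (A i j * B i j) with hIab
  set Sb := ∑ i, ∑ j, (B i j) ^ 2 with hSb
  have hPnorm : 0 < ‖P‖ := by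
    simpa [norm_pos_iff] using hP0
  -- f at scaled point
  have hfscale : ∀ c : ℝ, fObj Pbar (c • P)
      = (1/2) * ((c^2)^2 * Sa - 2 * (c^2) * Iab + Sb) := by
    intro c
    have hFm : Fm Pbar (c • P) = (c ^ 2) • A - B := by
      rw [Fm, smul_mul_smul_transpose, Kop_smul]
    rw [fObj, hFm, frob_norm_sq]
    have : ∀ i j : Fin n, (((c^2) • A - B) i j) ^ 2
        = (c^2)^2 * (A i j)^2 - 2 * (c^2) * (A i j * B i j) + (B i j)^2 := by
      intro i j
      simp [Matrix.sub_apply, Matrix.smul_apply, smul_eq_mul]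
      ring
    simp_rw [this, Finset.sum_add_distrib, Finset.sum_sub_distrib, ← Finset.mul_sum]
    rfl
  have hf1 : fObj Pbar P = (1/2) * (Sa - 2 * Iab + Sb) := by
    have := hfscale 1
    simpa using this
  -- the comparison for any scaling within the ball
  have hcomp : ∀ c : ℝ, |c - 1| * ‖P‖ ≤ δ →
      (c^2)^2 * Sa - 2 * (c^2) * Iab ≤ Sa - 2 * Iab := by
    intro c hc
    have hnear : ‖c • P - P‖ ≤ δ := by
      have : c • P - P = (c - 1) • P := by
        rw [sub_smul, one_smul]
      rw [this, norm_smul]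
      simpa [Real.norm_eq_abs] using hc
    have := hloc (c • P) hnear
    rw [hfscale c, hf1] at this
    linarith
  -- it suffices to show Sa = 0
  have hSa_nonneg : 0 ≤ Sa := by
    apply Finset.sum_nonneg; intro i _; apply Finset.sum_nonneg; intro j _; positivity
  have hSa0 : Sa = 0 := by
    by_contra hne
    have hSapos : 0 < Sa := lt_of_le_of_ne hSa_nonneg (Ne.symm hne)
    set ε := min 1 (δ / ‖P‖) / 2 with hε
    have hεpos : 0 < ε := by
      have : 0 < δ / ‖P‖ := div_pos hδ hPnorm
      positivity
    have hεle1 : ε < 1 := by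
      have h1 : min 1 (δ / ‖P‖) ≤ 1 := min_le_left _ _
      linarith
    have hεball : ε * ‖P‖ ≤ δ := by
      have h2 : ε ≤ δ / ‖P‖ := by
        have := min_le_right 1 (δ / ‖P‖)
        linarith
      calc ε * ‖P‖ ≤ (δ / ‖P‖) * ‖P‖ := by
            apply mul_le_mul_of_nonneg_right h2 (le_of_lt hPnorm)
        _ = δ := by field_simp
    by_cases hcase : Iab ≤ Sa
    · -- scale up: c = 1 + ε
      have hc := hcomp (1 + ε) (by
        rw [show (1 + ε) - 1 = ε by ring, abs_of_pos hεpos]; exact hεball)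
      have hs1 : (1:ℝ) < (1+ε)^2 := by nlinarith
      have hp : (0:ℝ) < (1+ε)^2 - 1 := by linarith
      nlinarith [hc, mul_pos hSapos (mul_pos hp hp),
        mul_nonneg (sub_nonneg.mpr hcase) (le_of_lt hp)]
    · -- scale down: c = 1 - ε
      push_neg at hcase
      have hc := hcomp (1 - ε) (by
        rw [show (1 - ε) - 1 = -ε by ring, abs_neg, abs_of_pos hεpos]; exact hεball)
      have hc2 : (1 - ε)^2 < 1 := by nlinarith
      have key : 0 < (1 - (1-ε)^2) * (2 * Iab - ((1-ε)^2 + 1) * Sa) := by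
        apply mul_pos (by linarith)
        nlinarith
      nlinarith
  -- conclude A = 0
  have hnorm : ‖A‖ ^ 2 = 0 := by rw [frob_norm_sq]; exact hSa0
  have : ‖A‖ = 0 := by
    nlinarith [norm_nonneg A]
  exact norm_eq_zero.mp this
end
end

section
/- If L ∈ ℝ^{(n−1)×d} is a stationary point of f_L, i.e., VᵀK*(F(VL))VL = 0, and rank(L) = n − 1, then L is a global minimizer of f_L: F(VL) = 0, i.e., K(VL(VL)ᵀ) = D̄. -/
open Matrix

attribute [local instance] Matrix.frobeniusNormedAddCommGroup Matrix.frobeniusNormedSpace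

noncomputable section

/-- Auxiliary: `Kop` is additive on differences. -/
lemma Kop_sub' {n : ℕ} (A B : Matrix (Fin n) (Fin n) ℝ) :
    Kop (A - B) = Kop A - Kop B := by
  ext i j
  simp [Kop, vecMulVec_apply, Matrix.diag, eV, Matrix.sub_apply, Matrix.add_apply]
  ring

/-- Auxiliary: `Kop (P Pᵀ)` is symmetric. -/
lemma Kop_transpose' {n d : ℕ} (P : Matrix (Fin n) (Fin d) ℝ) :
    (Kop (P * Pᵀ))ᵀ = Kop (P * Pᵀ) := by
  ext i j
  simp [Kop, vecMulVec_apply, Matrix.diag, eV, Matrix.mul_apply,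
    Matrix.transpose_apply, Matrix.add_apply, Matrix.sub_apply, mul_comm]
  ring

/-- Auxiliary adjoint identity: for symmetric `S`,
`⟨S, K(H)⟩ = ⟨K*(S), H⟩`. -/
lemma adj_trace' {n : ℕ} (S H : Matrix (Fin n) (Fin n) ℝ) (hS : Sᵀ = S) :
    Matrix.trace (Sᵀ * Kop H) = Matrix.trace (Kstar S * H) := by
  rw [hS]
  simp only [Kop, Kstar, Matrix.trace, Matrix.mul_apply, Matrix.diag, Matrix.add_apply,
    Matrix.sub_apply, Matrix.smul_apply, vecMulVec_apply, eV, Matrix.diagonal_apply,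
    Matrix.mulVec, dotProduct, smul_eq_mul]
  have hs : ∀ x y, S y x = S x y := fun x y => congrFun (congrFun hS x) y
  simp only [mul_one, one_mul, mul_add, mul_sub, sub_mul, add_mul, mul_ite, mul_zero,
    ite_mul, zero_mul, Finset.sum_add_distrib, Finset.sum_sub_distrib, Finset.sum_ite_eq,
    Finset.mem_univ, if_true]
  have hA : ∑ x : Fin n, ∑ y : Fin n, S x y * H y y
      = ∑ x : Fin n, (∑ y : Fin n, S x y) * H x x := by
    rw [Finset.sum_comm]
    refine Finset.sum_congr rfl fun y _ => ?_
    rw [← Finset.sum_mul]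
    congr 1
    exact Finset.sum_congr rfl fun x _ => (hs x y).symm ▸ rfl
  have hB : ∑ x : Fin n, ∑ y : Fin n, S x y * H x x
      = ∑ x : Fin n, (∑ y : Fin n, S x y) * H x x :=
    Finset.sum_congr rfl fun x _ => (Finset.sum_mul _ _ _).symm
  have hC : ∑ x : Fin n, ∑ y : Fin n, S x y * (2 * H y x)
      = ∑ x : Fin n, ∑ y : Fin n, 2 * S x y * H y x :=
    Finset.sum_congr rfl fun x _ => Finset.sum_congr rfl fun y _ => by ring
  rw [hA, hB, hC, ← Finset.sum_add_distrib]
  congr 1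
  exact Finset.sum_congr rfl fun x _ => by ring

/-- Auxiliary: a matrix with vanishing Frobenius-squared trace is zero. -/
lemma zero_of_trace' {n : ℕ} (S : Matrix (Fin n) (Fin n) ℝ) (h : Matrix.trace (Sᵀ * S) = 0) :
    S = 0 := by
  have h2 : ∑ j, ∑ i, S i j ^ 2 = 0 := by
    rw [← h]
    simp [Matrix.trace, Matrix.mul_apply, Matrix.diag, sq]
  ext i j
  have := Finset.sum_eq_zero_iff_of_nonneg (fun j _ => Finset.sum_nonneg
    (fun i _ => sq_nonneg (S i j))) |>.mp h2 j (Finset.mem_univ j)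
  have := Finset.sum_eq_zero_iff_of_nonneg (fun i _ => sq_nonneg (S i j)) |>.mp this i
    (Finset.mem_univ i)
  simpa using pow_eq_zero_iff (n := 2) (by norm_num) |>.mp this

/-- Auxiliary: `V Vᵀ` acts as the identity on matrices whose columns are orthogonal to `e`. -/
lemma proj_e' {n d : ℕ} (hn : 0 < n)
    (V : Matrix (Fin n) (Fin (n - 1)) ℝ) (hV : Vᵀ * V = 1) (hVe : Vᵀ *ᵥ eV n = 0)
    (P : Matrix (Fin n) (Fin d) ℝ) (hP : Pᵀ *ᵥ eV n = 0) :
    V * (Vᵀ * P) = P := by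
  set c : ℝ := (Real.sqrt n)⁻¹ with hc
  set u : Matrix (Fin n) (Fin 1) ℝ := Matrix.of (fun _ _ => c) with hu
  have hcc : c * c = (n : ℝ)⁻¹ := by
    rw [hc, ← mul_inv, Real.mul_self_sqrt (Nat.cast_nonneg n)]
  have h1 : Vᵀ * u = 0 := by
    ext i j
    have : ∑ x : Fin n, V x i = 0 := by
      have := congrFun hVe i
      simpa only [mulVec, dotProduct, eV, mul_one, transpose_apply, Pi.zero_apply] using this
    simp [hu, mul_apply, transpose_apply, ← Finset.sum_mul, this]
  have h2 : uᵀ * V = 0 := by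
    ext i j
    have : ∑ x : Fin n, V x j = 0 := by
      have := congrFun hVe j
      simpa only [mulVec, dotProduct, eV, mul_one, transpose_apply, Pi.zero_apply] using this
    simp [hu, mul_apply, transpose_apply, ← Finset.mul_sum, this]
  have h3 : uᵀ * u = 1 := by
    ext i j
    rw [Subsingleton.elim i j]
    simp [hu, mul_apply, hcc, one_apply]
    field_simp
  have hWtW : (fromCols V u)ᵀ * fromCols V u = 1 := by
    rw [transpose_fromCols, fromRows_mul_fromCols, hV, h1, h2, h3, fromBlocks_one]
  have hWWt : fromCols V u * (fromCols V u)ᵀ = 1 := by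
    rw [← mul_eq_one_comm_of_equiv
      ((finSumFinEquiv (m := n-1) (n := 1)).trans (finCongr (by omega)))]
    exact hWtW
  have hVVt : V * Vᵀ + u * uᵀ = 1 := by
    rw [← hWWt, transpose_fromCols, fromCols_mul_fromRows]
  have huP : uᵀ * P = 0 := by
    ext i j
    have : ∑ x : Fin n, P x j = 0 := by
      have := congrFun hP j
      simpa only [mulVec, dotProduct, eV, mul_one, transpose_apply, Pi.zero_apply] using this
    simp [hu, mul_apply, transpose_apply, ← Finset.mul_sum, this]
  calc V * (Vᵀ * P) = (V * Vᵀ + u * uᵀ) * P - u * (uᵀ * P) := by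
        rw [Matrix.add_mul, ← Matrix.mul_assoc, ← Matrix.mul_assoc, add_sub_cancel_right]
      _ = P := by rw [hVVt, huP, Matrix.one_mul, Matrix.mul_zero, sub_zero]

/-- a stationary point `L` of `f_L` with `rank(L) = n−1` is a global
minimizer: `F(VL) = 0`, i.e. `K(VL(VL)ᵀ) = D̄`. -/
theorem stmt_16 {n d : ℕ} (hn : 0 < n) (hd : 0 < d)
    (Pbar : Matrix (Fin n) (Fin d) ℝ) (hPbar : Pbarᵀ *ᵥ eV n = 0)
    (V : Matrix (Fin n) (Fin (n - 1)) ℝ) (hV : Vᵀ * V = 1) (hVe : Vᵀ *ᵥ eV n = 0)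
    (L : Matrix (Fin (n - 1)) (Fin d) ℝ)
    (hstat : Vᵀ * Kstar (Fm Pbar (V * L)) * (V * L) = 0)
    (hrank : L.rank = n - 1) :
    Fm Pbar (V * L) = 0 ∧ Kop ((V * L) * (V * L)ᵀ) = Kop (Pbar * Pbarᵀ) := by
  set S := Fm Pbar (V * L) with hSdef
  -- L Lᵀ is invertible
  have hrank2 : (L * Lᵀ).rank = Fintype.card (Fin (n - 1)) := by
    rw [Matrix.rank_self_mul_transpose, hrank, Fintype.card_fin]
  have hunit : IsUnit (L * Lᵀ) := by
    rw [← Matrix.mulVec_surjective_iff_isUnit]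
    have htop : LinearMap.range (L * Lᵀ).mulVecLin = ⊤ := by
      apply Submodule.eq_top_of_finrank_eq
      rw [Module.finrank_pi]
      exact hrank2
    intro y
    obtain ⟨x, hx⟩ := LinearMap.range_eq_top.mp htop y
    exact ⟨x, by simpa only [Matrix.mulVecLin_apply] using hx⟩
  have hdet : IsUnit (L * Lᵀ).det := (Matrix.isUnit_iff_isUnit_det _).mp hunit
  -- stationarity gives Vᵀ K*(S) V = 0
  have hA0 : Vᵀ * Kstar S * V = 0 := by
    have hAL : (Vᵀ * Kstar S * V) * L = 0 := by
      rw [Matrix.mul_assoc (Vᵀ * Kstar S) V L]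
      exact hstat
    calc Vᵀ * Kstar S * V
        = (Vᵀ * Kstar S * V) * ((L * Lᵀ) * (L * Lᵀ)⁻¹) := by
          rw [Matrix.mul_nonsing_inv _ hdet, Matrix.mul_one]
      _ = (((Vᵀ * Kstar S * V) * L) * Lᵀ) * (L * Lᵀ)⁻¹ := by
          simp only [Matrix.mul_assoc]
      _ = 0 := by rw [hAL, Matrix.zero_mul, Matrix.zero_mul]
  -- symmetry of S and linearity of Kop
  have hSsym : Sᵀ = S := by
    rw [hSdef, Fm, Matrix.transpose_sub, Kop_transpose', Kop_transpose']
  have hSK : S = Kop ((V * L) * (V * L)ᵀ - Pbar * Pbarᵀ) := by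
    rw [hSdef, Fm, Kop_sub']
  -- the difference Gram matrix factors through V
  have hP : V * (Vᵀ * Pbar) = Pbar := proj_e' hn V hV hVe Pbar hPbar
  set B := L * Lᵀ - (Vᵀ * Pbar) * (Vᵀ * Pbar)ᵀ with hBdef
  have hH : (V * L) * (V * L)ᵀ - Pbar * Pbarᵀ = V * B * Vᵀ := by
    have hPP : Pbar * Pbarᵀ = V * ((Vᵀ * Pbar) * (Vᵀ * Pbar)ᵀ) * Vᵀ := by
      conv_lhs => rw [← hP]
      rw [Matrix.transpose_mul]
      simp only [Matrix.mul_assoc]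
    rw [hBdef, Matrix.mul_sub, Matrix.sub_mul, hPP, Matrix.transpose_mul]
    simp only [Matrix.mul_assoc]
  -- trace computation
  have htr : Matrix.trace (Sᵀ * S) = 0 := by
    calc Matrix.trace (Sᵀ * S)
        = Matrix.trace (Sᵀ * Kop ((V * L) * (V * L)ᵀ - Pbar * Pbarᵀ)) := by rw [← hSK]
      _ = Matrix.trace (Kstar S * ((V * L) * (V * L)ᵀ - Pbar * Pbarᵀ)) := adj_trace' _ _ hSsym
      _ = Matrix.trace (Kstar S * (V * B * Vᵀ)) := by rw [hH]
      _ = Matrix.trace ((Kstar S * (V * B)) * Vᵀ) := by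
          rw [Matrix.mul_assoc (Kstar S) (V * B) Vᵀ]
      _ = Matrix.trace (Vᵀ * (Kstar S * (V * B))) := Matrix.trace_mul_comm _ _
      _ = Matrix.trace ((Vᵀ * Kstar S * V) * B) := by
          simp only [Matrix.mul_assoc]
      _ = 0 := by rw [hA0, Matrix.zero_mul, Matrix.trace_zero]
  have hS0 : S = 0 := zero_of_trace' S htr
  refine ⟨hS0, ?_⟩
  have : Kop ((V * L) * (V * L)ᵀ) - Kop (Pbar * Pbarᵀ) = 0 := hS0
  exact sub_eq_zero.mp this
end
end
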